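/- For n ≥ 2, the image of Ω^{2n}_{2n-1,-1} under Ψ_n: U(W_{≥-1}) → T_n equals (-1)^n binom(2n,n) v_{n-1}^2, a nonzero scalar multiple of v_{n-1}^2. -/

import Mathlib

noncomputable section

/-- Generators of `T_n = A_1 ⊗ U(g_n)`: `t`, `∂`, and `v_0, …, v_{n-1}`. -/
inductive TGen (n : ℕ) : Type
  | t : TGen n
  | d : TGen n
  | v : Fin n → TGen n

/-- Defining relations of `T_n = A_1 ⊗ U(g_n)`: `∂t = t∂ + 1`, the `v_i` commute with
`t` and `∂`, and `[v_i, v_j] = (j-i) v_{i+j}` (with `v_m = 0` for `m ≥ n`). -/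
inductive tnRel (k : Type) [Field k] (n : ℕ) :
    FreeAlgebra k (TGen n) → FreeAlgebra k (TGen n) → Prop
  | dt : tnRel k n (FreeAlgebra.ι k (TGen.d : TGen n) * FreeAlgebra.ι k (TGen.t : TGen n))
      (FreeAlgebra.ι k (TGen.t : TGen n) * FreeAlgebra.ι k (TGen.d : TGen n) + 1)
  | tv (i : Fin n) :
      tnRel k n (FreeAlgebra.ι k (TGen.t : TGen n) * FreeAlgebra.ι k (TGen.v i))
        (FreeAlgebra.ι k (TGen.v i) * FreeAlgebra.ι k (TGen.t : TGen n))
  | dv (i : Fin n) :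
      tnRel k n (FreeAlgebra.ι k (TGen.d : TGen n) * FreeAlgebra.ι k (TGen.v i))
        (FreeAlgebra.ι k (TGen.v i) * FreeAlgebra.ι k (TGen.d : TGen n))
  | vv (i j : Fin n) :
      tnRel k n (FreeAlgebra.ι k (TGen.v i) * FreeAlgebra.ι k (TGen.v j))
        (FreeAlgebra.ι k (TGen.v j) * FreeAlgebra.ι k (TGen.v i) +
          ((j : ℤ) - (i : ℤ)) •
            (if h : i.1 + j.1 < n then FreeAlgebra.ι k (TGen.v (⟨i.1 + j.1, h⟩ : Fin n))
             else 0))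

/-- The algebra `T_n = A_1 ⊗ U(g_n)`, presented by generators and relations. -/
abbrev Tn (k : Type) [Field k] (n : ℕ) := RingQuot (tnRel k n)

/-- The element `t ∈ T_n`. -/
def tT (k : Type) [Field k] (n : ℕ) : Tn k n :=
  RingQuot.mkAlgHom k (tnRel k n) (FreeAlgebra.ι k (TGen.t : TGen n))

/-- The element `∂ ∈ T_n`. -/
def dT (k : Type) [Field k] (n : ℕ) : Tn k n :=
  RingQuot.mkAlgHom k (tnRel k n) (FreeAlgebra.ι k (TGen.d : TGen n))

/-- The element `v_j ∈ T_n`. -/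
def vT (k : Type) [Field k] (n : ℕ) (j : Fin n) : Tn k n :=
  RingQuot.mkAlgHom k (tnRel k n) (FreeAlgebra.ι k (TGen.v j))

/-- The image `c_i = Ψ_n(e_i) = t^{i+1}∂ + Σ_{j=0}^{n-1} binom(i+1,j+1) t^{i-j} v_j ∈ T_n`
of the Witt generator `e_i` under the `n`-th orbit homomorphism. -/
def cT (k : Type) [Field k] (n : ℕ) (i : ℤ) : Tn k n :=
  tT k n ^ (i + 1).toNat * dT k n +
    ∑ j : Fin n, (((i + 1).toNat.choose (j.1 + 1) : ℤ)) •
      (tT k n ^ (i - j.1).toNat * vT k n j)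

/-- The image of the differentiator `Ω^m_{k,s}` under `Ψ_n`, computed via
`Ψ_n(e_i) = c_i`: `Ω^0 = c_k c_s`, `Ω^{m+1}_{k,s} = Ω^m_{k,s} - Ω^m_{k-1,s+1}`. -/
def ΩT (k : Type) [Field k] (n : ℕ) : ℕ → ℤ → ℤ → Tn k n
  | 0, a, s => cT k n a * cT k n s
  | m + 1, a, s => ΩT k n m a s - ΩT k n m (a - 1) (s + 1)

/-!
Writing `G i = c_{a-i} c_{s+i}`, the recursion for the differentiators says exactly that
`Ω^m_{a,s} = (-1)^m (Δ^m G)(0)` for the forward difference `Δ`. For `0 ≤ i ≤ 2n`, normal ordering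
`c_{2n-1-i} c_{i-1}` (using `∂ t^b = t^b ∂ + b t^(b-1)`) writes it as a combination of monomials
independent of `i`, with coefficients `C(2n-i, r) C(i, s)`. The `2n`-th difference at `0` of such a
coefficient vanishes unless `r + s = 2n`, where it is `(-1)^r C(2n, r)`; since every index of a `v`
is below `n`, only the monomial `v_{n-1} v_{n-1}` (with `r = s = n`) survives.
-/

open Finset fwdDiff

theorem Nat.choose_mul_choose_sub_comm (M i r : ℕ) :
    M.choose i * (M - i).choose r = M.choose r * (M - r).choose i := by
  rcases le_or_gt (i + r) M with h | h
  · have hi := Nat.choose_mul (n := M) (Nat.le_add_right i r)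
    have hr := Nat.choose_mul (n := M) (Nat.le_add_left r i)
    rw [Nat.add_sub_cancel_left] at hi
    rw [Nat.add_sub_cancel] at hr
    rw [← hi, ← hr, Nat.choose_symm_add]
  · rcases le_or_gt i M with hi | hi
    · rcases le_or_gt r M with hr | hr
      · rw [Nat.choose_eq_zero_of_lt (by omega : M - i < r),
          Nat.choose_eq_zero_of_lt (by omega : M - r < i), mul_zero, mul_zero]
      · simp [Nat.choose_eq_zero_of_lt hr, Nat.choose_eq_zero_of_lt (by omega : M - i < r)]
    · simp [Nat.choose_eq_zero_of_lt hi, Nat.choose_eq_zero_of_lt (by omega : M - r < i)]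

section
variable {M G : Type*} [AddCommMonoid M] [AddCommGroup G] (h : M)

theorem fwdDiff_iter_add_apply (f g : M → G) (m : ℕ) (y : M) :
    Δ_[h] ^[m] (fun i ↦ f i + g i) y = Δ_[h] ^[m] f y + Δ_[h] ^[m] g y := by
  simp only [fwdDiff_iter_eq_sum_shift, smul_add, sum_add_distrib]

theorem fwdDiff_iter_sum_apply {ι : Type*} (s : Finset ι) (f : ι → M → G) (m : ℕ) (y : M) :
    Δ_[h] ^[m] (fun i ↦ ∑ a ∈ s, f a i) y = ∑ a ∈ s, Δ_[h] ^[m] (f a) y := by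
  simp only [fwdDiff_iter_eq_sum_shift, smul_sum]
  exact sum_comm

theorem fwdDiff_iter_const_apply {m : ℕ} (hm : m ≠ 0) (x : G) (y : M) :
    Δ_[h] ^[m] (fun _ ↦ x) y = 0 := by
  obtain ⟨m, rfl⟩ := Nat.exists_eq_succ_of_ne_zero hm
  rw [Function.iterate_succ_apply, fwdDiff_const]
  simp [fwdDiff_iter_eq_sum_shift]

theorem fwdDiff_iter_smul_const {R : Type*} [Ring R] [Module R G] (φ : M → R) (x : G) (m : ℕ)
    (y : M) : Δ_[h] ^[m] (fun i ↦ φ i • x) y = Δ_[h] ^[m] φ y • x := by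
  simp only [fwdDiff_iter_eq_sum_shift, sum_smul, smul_assoc]

theorem fwdDiff_iter_zero_congr {f g : ℕ → G} {m : ℕ}
    (hfg : ∀ i ≤ m, f i = g i) : Δ_[1] ^[m] f 0 = Δ_[1] ^[m] g 0 := by
  simp only [fwdDiff_iter_eq_sum_shift]
  exact sum_congr rfl fun i hi ↦ by
    rw [zero_add, smul_eq_mul, mul_one, hfg i (Nat.lt_succ_iff.mp (mem_range.mp hi))]

end

theorem fwdDiff_iter_choose_sub_mul_choose (M r s : ℕ) :
    Δ_[1] ^[M] (fun i : ℕ ↦ ((M - i).choose r * i.choose s : ℤ)) 0 =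
      if r + s = M then (-1 : ℤ) ^ r * M.choose r else 0 := by
  simp only [fwdDiff_iter_eq_sum_shift, zero_add, smul_eq_mul, mul_one]
  rcases lt_or_ge M r with hr | hr
  · rw [if_neg (by omega)]
    exact sum_eq_zero fun k _ ↦ by simp [Nat.choose_eq_zero_of_lt (show M - k < r by omega)]
  obtain ⟨N, rfl⟩ : ∃ N, M = N + r := ⟨M - r, by omega⟩
  have hhead : ∀ k ∈ range (N + 1),
      (-1 : ℤ) ^ (N + r - k) * (N + r).choose k * ((N + r - k).choose r * k.choose s) =
        (-1 : ℤ) ^ r * (N + r).choose r * ((-1 : ℤ) ^ (N - k) * N.choose k * k.choose s) := by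
    intro k hk
    have hsign : (-1 : ℤ) ^ (N + r - k) = (-1) ^ (N - k) * (-1) ^ r := by
      rw [← pow_add, show N - k + r = N + r - k by have := mem_range.mp hk; omega]
    have hrev : ((N + r).choose k * (N + r - k).choose r : ℤ) = (N + r).choose r * N.choose k := by
      exact_mod_cast Nat.add_sub_cancel N r ▸ Nat.choose_mul_choose_sub_comm (N + r) k r
    rw [hsign]
    linear_combination ((-1 : ℤ) ^ (N - k) * (-1) ^ r * k.choose s) * hrev
  have htail : ∀ k ∈ range r,
      (-1 : ℤ) ^ (N + r - (N + 1 + k)) * (N + r).choose (N + 1 + k) *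
        ((N + r - (N + 1 + k)).choose r * (N + 1 + k).choose s) = 0 := fun k hk ↦ by
    simp [Nat.choose_eq_zero_of_lt (show N + r - (N + 1 + k) < r by have := mem_range.mp hk; omega)]
  have hN := fwdDiff_iter_choose_zero s N
  simp only [fwdDiff_iter_eq_sum_shift, zero_add, smul_eq_mul, mul_one] at hN
  rw [show N + r + 1 = N + 1 + r by ring, sum_range_add, sum_eq_zero htail, add_zero,
    sum_congr rfl hhead, ← mul_sum, hN]
  rcases eq_or_ne N s with rfl | hs
  · simp [add_comm]
  · rw [if_neg hs, if_neg (by omega), mul_zero]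

theorem fwdDiff_iter_choose_of_lt {M s : ℕ} (h : s < M) :
    Δ_[1] ^[M] (fun i : ℕ ↦ (i.choose s : ℤ)) 0 = 0 := by
  rw [fwdDiff_iter_choose_zero, if_neg h.ne']

theorem fwdDiff_iter_natCast_of_one_lt {M : ℕ} (h : 1 < M) :
    Δ_[1] ^[M] (Nat.cast : ℕ → ℤ) 0 = 0 := by
  simpa using fwdDiff_iter_choose_of_lt h

theorem fwdDiff_iter_choose_sub_of_lt {M r : ℕ} (h : r < M) :
    Δ_[1] ^[M] (fun i : ℕ ↦ ((M - i).choose r : ℤ)) 0 = 0 := by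
  simpa [h.ne] using fwdDiff_iter_choose_sub_mul_choose M r 0

theorem pow_mul_mul_pow_of_commutator_eq_one {R : Type*} [Ring R] {d t : R}
    (h : d * t = t * d + 1) (a b : ℕ) :
    t ^ a * d * t ^ b = t ^ (a + b) * d + (b : ℤ) • t ^ (a + b - 1) := by
  induction b with
  | zero => simp
  | succ b ih =>
    have hshift : (b : ℤ) • (t ^ (a + b - 1) * t) = (b : ℤ) • t ^ (a + b) := by
      rcases b.eq_zero_or_pos with rfl | hb
      · simp
      · rw [← pow_succ, Nat.sub_add_cancel (by omega)]
    rw [pow_succ, ← mul_assoc, ih, add_mul, smul_mul_assoc, hshift, mul_assoc, h,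
      show a + (b + 1) - 1 = a + b by omega, ← add_assoc, pow_succ]
    push_cast
    rw [add_zsmul, one_zsmul]
    noncomm_ring

/-- Exponents written with truncated subtraction, such as `a - 1 - j` next to `C(a, j + 1)`, only
matter where the binomial coefficient in front of them is nonzero. -/
theorem Nat.choose_zsmul_congr {M : Type*} [AddCommGroup M] {a r : ℕ} {x y : M}
    (h : r ≤ a → x = y) : (a.choose r : ℤ) • x = (a.choose r : ℤ) • y := by
  rcases le_or_gt r a with hr | hr
  · rw [h hr]
  · simp [Nat.choose_eq_zero_of_lt hr]

namespace Tn

variable (k : Type) [Field k] (n : ℕ)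

local notation "𝐭" => tT k n
local notation "∂" => dT k n
local notation "𝐯" => vT k n

theorem dT_mul_tT : ∂ * 𝐭 = 𝐭 * ∂ + 1 := by
  simpa only [tT, dT, map_mul, map_add, map_one] using
    RingQuot.mkAlgHom_rel k (tnRel.dt (k := k) (n := n))

theorem commute_tT_vT (j : Fin n) : Commute 𝐭 (𝐯 j) := by
  unfold Commute SemiconjBy
  simpa only [tT, vT, map_mul] using RingQuot.mkAlgHom_rel k (tnRel.tv (k := k) (n := n) j)

theorem commute_dT_vT (j : Fin n) : Commute ∂ (𝐯 j) := by
  unfold Commute SemiconjBy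
  simpa only [dT, vT, map_mul] using RingQuot.mkAlgHom_rel k (tnRel.dv (k := k) (n := n) j)

theorem cT_natCast_sub_one (a : ℕ) :
    cT k n (a - 1) = 𝐭 ^ a * ∂ + ∑ j : Fin n, (a.choose (j + 1) : ℤ) • (𝐭 ^ (a - 1 - j) * 𝐯 j) := by
  rw [cT, show ((a : ℤ) - 1 + 1).toNat = a by omega]
  congr 1
  exact sum_congr rfl fun j _ ↦ by rw [show ((a : ℤ) - 1 - j).toNat = a - 1 - j by omega]

theorem pow_mul_dT_mul_pow_mul_dT {a b c : ℕ} (h : a + b = c) :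
    𝐭 ^ a * ∂ * (𝐭 ^ b * ∂) = 𝐭 ^ c * ∂ ^ 2 + (b : ℤ) • (𝐭 ^ (c - 1) * ∂) := by
  rw [← mul_assoc, pow_mul_mul_pow_of_commutator_eq_one (dT_mul_tT k n), h, add_mul,
    smul_mul_assoc, mul_assoc, sq]

theorem pow_mul_dT_mul_choose_smul {a b c : ℕ} (h : a + b = c) (j : Fin n) :
    𝐭 ^ a * ∂ * ((b.choose (j + 1) : ℤ) • (𝐭 ^ (b - 1 - j) * 𝐯 j)) =
      (b.choose (j + 1) : ℤ) • (𝐭 ^ (c - 1 - j) * 𝐯 j * ∂) +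
        (b.choose (j + 2) : ℤ) • (((j + 2 : ℕ) : ℤ) • (𝐭 ^ (c - 2 - j) * 𝐯 j)) := by
  have hpascal : (b.choose (j + 1) * (b - 1 - j : ℕ) : ℤ) = b.choose (j + 2) * (j + 2 : ℕ) := by
    rw [Nat.sub_sub, add_comm 1]
    exact_mod_cast (Nat.choose_succ_right_eq b (j + 1)).symm
  rw [mul_smul_comm, ← mul_assoc, pow_mul_mul_pow_of_commutator_eq_one (dT_mul_tT k n), add_mul,
    mul_assoc, (commute_dT_vT k n j).eq, smul_mul_assoc, zsmul_add, smul_smul, hpascal, mul_smul,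
    ← mul_assoc]
  congr 1
  · exact Nat.choose_zsmul_congr fun hj ↦ by rw [show a + (b - 1 - j) = c - 1 - j by omega]
  · exact Nat.choose_zsmul_congr fun hj ↦ by rw [show a + (b - 1 - j) - 1 = c - 2 - j by omega]

theorem choose_smul_mul_pow_mul_dT {a b c : ℕ} (h : a + b = c) (j : Fin n) :
    (a.choose (j + 1) : ℤ) • (𝐭 ^ (a - 1 - j) * 𝐯 j) * (𝐭 ^ b * ∂) =
      (a.choose (j + 1) : ℤ) • (𝐭 ^ (c - 1 - j) * 𝐯 j * ∂) := by
  rw [smul_mul_assoc]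
  refine Nat.choose_zsmul_congr fun hj ↦ ?_
  rw [mul_assoc, ← mul_assoc (𝐯 j), ← ((commute_tT_vT k n j).pow_left b).eq, ← mul_assoc,
    ← mul_assoc, ← pow_add, show a - 1 - j + b = c - 1 - j by omega]

theorem choose_smul_mul_choose_smul {a b c : ℕ} (h : a + b = c) (p q : Fin n) :
    (a.choose (p + 1) : ℤ) • (𝐭 ^ (a - 1 - p) * 𝐯 p) *
        ((b.choose (q + 1) : ℤ) • (𝐭 ^ (b - 1 - q) * 𝐯 q)) =
      (a.choose (p + 1) * b.choose (q + 1) : ℤ) • (𝐭 ^ (c - 2 - p - q) * 𝐯 p * 𝐯 q) := by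
  rw [smul_mul_smul_comm, mul_smul, mul_smul]
  refine Nat.choose_zsmul_congr fun hp ↦ ?_
  refine Nat.choose_zsmul_congr fun hq ↦ ?_
  rw [mul_assoc, ← mul_assoc (𝐯 p), ← ((commute_tT_vT k n p).pow_left _).eq, ← mul_assoc,
    ← mul_assoc, ← pow_add, show a - 1 - p + (b - 1 - q) = c - 2 - p - q by omega]

theorem cT_sub_one_mul_cT_sub_one {a b c : ℕ} (h : a + b = c) :
    cT k n (a - 1) * cT k n (b - 1) =
      𝐭 ^ c * ∂ ^ 2 + (b : ℤ) • (𝐭 ^ (c - 1) * ∂)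
        + ∑ j : Fin n, (a.choose (j + 1) : ℤ) • (𝐭 ^ (c - 1 - j) * 𝐯 j * ∂)
        + ∑ j : Fin n, (b.choose (j + 1) : ℤ) • (𝐭 ^ (c - 1 - j) * 𝐯 j * ∂)
        + ∑ j : Fin n, (b.choose (j + 2) : ℤ) • (((j + 2 : ℕ) : ℤ) • (𝐭 ^ (c - 2 - j) * 𝐯 j))
        + ∑ p : Fin n, ∑ q : Fin n,
            (a.choose (p + 1) * b.choose (q + 1) : ℤ) • (𝐭 ^ (c - 2 - p - q) * 𝐯 p * 𝐯 q) := by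
  rw [cT_natCast_sub_one, cT_natCast_sub_one, add_mul, mul_add, mul_add,
    pow_mul_dT_mul_pow_mul_dT k n h, mul_sum, sum_mul, sum_mul_sum]
  simp only [pow_mul_dT_mul_choose_smul k n h, choose_smul_mul_pow_mul_dT k n h,
    choose_smul_mul_choose_smul k n h, sum_add_distrib]
  abel

theorem ΩT_eq_fwdDiff (m : ℕ) (a s : ℤ) :
    ΩT k n m a s = (-1 : ℤ) ^ m • Δ_[1] ^[m] (fun i : ℕ ↦ cT k n (a - i) * cT k n (s + i)) 0 := by
  induction m generalizing a s with
  | zero => simp [ΩT]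
  | succ m ih =>
    have hshift : (fun i : ℕ ↦ cT k n (a - 1 - i) * cT k n (s + 1 + i)) =
        fun i ↦ cT k n (a - (i + 1 : ℕ)) * cT k n (s + (i + 1 : ℕ)) := by
      funext i
      push_cast
      ring_nf
    rw [ΩT, ih, ih, hshift, fwdDiff_iter_comp_add 1 (fun i : ℕ ↦ cT k n (a - i) * cT k n (s + i)),
      Function.iterate_succ_apply', fwdDiff, zero_add, pow_succ, mul_neg_one, neg_smul, zsmul_sub]
    abel

theorem fwdDiff_iter_cT_mul_cT (hn : 2 ≤ n) :
    Δ_[1] ^[2 * n] (fun i : ℕ ↦ cT k n (2 * n - 1 - i) * cT k n (-1 + i)) 0 =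
      ((-1 : ℤ) ^ n * (2 * n).choose n) • 𝐯 ⟨n - 1, Nat.sub_one_lt_of_lt hn⟩ ^ 2 := by
  have hnat : ∀ i ≤ 2 * n, cT k n (2 * n - 1 - i) * cT k n (-1 + i) =
      cT k n ((2 * n - i : ℕ) - 1) * cT k n ((i : ℕ) - 1) := fun i hi ↦ by
    rw [show (2 * n - 1 - i : ℤ) = ((2 * n - i : ℕ) : ℤ) - 1 by omega, neg_add_eq_sub]
  rw [fwdDiff_iter_zero_congr hnat, fwdDiff_iter_zero_congr (m := 2 * n)
    fun i hi ↦ cT_sub_one_mul_cT_sub_one k n (Nat.sub_add_cancel hi)]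
  -- Every other coefficient is `i`, `C(i, s)` or `C(2n - i, r)` with `r, s ≤ n + 1 < 2n`.
  simp (disch := omega) only [fwdDiff_iter_add_apply, fwdDiff_iter_sum_apply,
    fwdDiff_iter_smul_const, fwdDiff_iter_const_apply, fwdDiff_iter_natCast_of_one_lt,
    fwdDiff_iter_choose_of_lt, fwdDiff_iter_choose_sub_of_lt, fwdDiff_iter_choose_sub_mul_choose,
    zero_zsmul, sum_const_zero, zero_add]
  have hdiag : ∀ p q : Fin n, (p : ℕ) + 1 + (q + 1) = 2 * n → (p : ℕ) = n - 1 ∧ (q : ℕ) = n - 1 :=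
    fun p q _ ↦ by omega
  rw [Fintype.sum_eq_single ⟨n - 1, by omega⟩ fun p hp ↦ sum_eq_zero fun q _ ↦ by
      rw [if_neg fun hpq ↦ Fin.val_ne_of_ne hp (hdiag p q hpq).1, zero_zsmul],
    Fintype.sum_eq_single ⟨n - 1, by omega⟩ fun q hq ↦ by
      rw [if_neg fun hpq ↦ Fin.val_ne_of_ne hq (hdiag _ q hpq).2, zero_zsmul],
    if_pos (by simp only; omega)]
  simp only [Nat.sub_add_cancel (by omega : 1 ≤ n),
    show 2 * n - 2 - (n - 1) - (n - 1) = 0 by omega, pow_zero, one_mul, sq]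

end Tn

/-- For `n ≥ 2`, `Ψ_n(Ω^{2n}_{2n-1,-1}) = (-1)^n binom(2n,n) v_{n-1}²`, a nonzero
scalar multiple of `v_{n-1}²`. -/
theorem psi_omega_eq (k : Type) [Field k] (n : ℕ) (hn : 2 ≤ n) :
    ΩT k n (2 * n) (2 * n - 1) (-1)
        = ((-1 : ℤ) ^ n * ((2 * n).choose n : ℤ)) • (vT k n (⟨n - 1, by omega⟩ : Fin n)) ^ 2 ∧
      ((-1 : ℤ) ^ n * ((2 * n).choose n : ℤ)) ≠ 0 := by
  refine ⟨?_, mul_ne_zero (pow_ne_zero _ (by norm_num))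
    (by exact_mod_cast (Nat.choose_pos (by omega : n ≤ 2 * n)).ne')⟩
  rw [Tn.ΩT_eq_fwdDiff, Tn.fwdDiff_iter_cT_mul_cT k n hn, pow_mul, neg_one_sq, one_pow, one_smul]
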